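/- arXiv:2107.14326 — 4 statements merged into one kernel-verified Lean document; each statement's English description precedes it below -/
import Mathlib

section
/- (Lemma 1.) Let q = (q0,q1,q2,q3) be a unit quaternion, let p_U, p_I ∈ ℝ³, let a, b, c ∈ ℝ, and set w = p_I + R(q)·p_U. The 3×3 matrix δp whose rows are (0,0,0) − w, (0,a,0) − w and (b,c,0) − w is invertible (full rank) if and only if a ≠ 0, b ≠ 0, and the third component w_z of w is nonzero; that is, if and only if the three anchors (0,0,0), (0,a,0), (b,c,0) are non-collinear and the mobile radio position w does not lie in the plane (z = 0) spanned by the three anchors. -/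
open Matrix

/-- The rotation matrix associated to a (unit) quaternion `(q0, q1, q2, q3)`. -/
noncomputable def rotOfQuat (q0 q1 q2 q3 : ℝ) : Matrix (Fin 3) (Fin 3) ℝ :=
  !![q0^2 + q1^2 - q2^2 - q3^2, 2*(q1*q2 - q0*q3), 2*(q1*q3 + q0*q2);
     2*(q1*q2 + q0*q3), q0^2 - q1^2 + q2^2 - q3^2, 2*(q2*q3 - q0*q1);
     2*(q1*q3 - q0*q2), 2*(q2*q3 + q0*q1), q0^2 - q1^2 - q2^2 + q3^2]

theorem det_anchor_differences {R : Type*} [CommRing R] (a b c : R) (w : Fin 3 → R) :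
    (Matrix.of ![(![0, 0, 0] : Fin 3 → R) - w, ![0, a, 0] - w, ![b, c, 0] - w]).det =
      a * b * w 2 := by
  simp only [det_fin_three, of_apply, Pi.sub_apply, cons_val_zero, cons_val_one,
    cons_val_two, head_cons, tail_cons]
  ring

theorem stmt_1_general (a b c : ℝ)
    (w : Fin 3 → ℝ)
    (δp : Matrix (Fin 3) (Fin 3) ℝ)
    (hδp : δp = Matrix.of
      ![(![0, 0, 0] : Fin 3 → ℝ) - w, (![0, a, 0] : Fin 3 → ℝ) - w,
        (![b, c, 0] : Fin 3 → ℝ) - w]) :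
    IsUnit δp ↔ (a ≠ 0 ∧ b ≠ 0 ∧ w 2 ≠ 0) := by
  rw [isUnit_iff_isUnit_det, isUnit_iff_ne_zero, hδp, det_anchor_differences,
    mul_ne_zero_iff, mul_ne_zero_iff, and_assoc]

theorem stmt_1 (q0 q1 q2 q3 : ℝ) (hq : q0^2 + q1^2 + q2^2 + q3^2 = 1)
    (pU pI : Fin 3 → ℝ) (a b c : ℝ)
    (w : Fin 3 → ℝ) (hw : w = pI + (rotOfQuat q0 q1 q2 q3).mulVec pU)
    (δp : Matrix (Fin 3) (Fin 3) ℝ)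
    (hδp : δp = Matrix.of
      ![(![0, 0, 0] : Fin 3 → ℝ) - w, (![0, a, 0] : Fin 3 → ℝ) - w,
        (![b, c, 0] : Fin 3 → ℝ) - w]) :
    IsUnit δp ↔ (a ≠ 0 ∧ b ≠ 0 ∧ w 2 ≠ 0) :=
  stmt_1_general a b c w δp hδp
end

section
/- (Lemma 2, explicit polynomial form.) Let q = (q0,q1,q2,q3) be a unit quaternion, let p_U = (p_Ux, p_Uy, p_Uz), p_I = (p_Ix, p_Iy, p_Iz) ∈ ℝ³, and let p_jy, p_kx ∈ ℝ. Let h = p_Uz + p_Iz + 2 p_Uy q0 q1 − 2 p_Uz q1² − 2 p_Ux q0 q2 − 2 p_Uz q2² + 2 p_Ux q1 q3 + 2 p_Uy q2 q3 and let f1, f2, f3 be as defined in the context. If p_jy ≠ 0, p_kx ≠ 0, and the third component of p_I + R(q)·p_U is nonzero, then the three determinants D1 = −16 p_jy p_kx · h · f1, D2 = 16 p_jy p_kx · h · f2, D3 = −16 p_jy p_kx · h · f3 are not all zero. -/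
/-
For a unit quaternion, `R = R(q)` is orthogonal, so `p_I + R p_U = R (p_U + Rᵀ p_I)`.
On the unit sphere `h` is the third component of `p_I + R p_U`, hence `h ≠ 0`, and
`(f3, f2, f1)` is `p_U + Rᵀ p_I`. As `p_jy p_kx h ≠ 0`, vanishing of the three determinants
forces `f1 = f2 = f3 = 0`, hence `p_I + R p_U = 0`, contradicting `h ≠ 0`.
-/

open Matrix

theorem add_mulVec_eq_mulVec_add_transpose_mulVec {n α : Type*} [Fintype n] [DecidableEq n]
    [CommSemiring α] {R : Matrix n n α} (hR : R * Rᵀ = 1) (p u : n → α) :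
    p + R *ᵥ u = R *ᵥ (u + Rᵀ *ᵥ p) := by
  rw [mulVec_add, mulVec_mulVec, hR, one_mulVec, add_comm]

section UnitQuaternion

variable {q0 q1 q2 q3 : ℝ}

theorem rotOfQuat_mul_transpose (hq : q0^2 + q1^2 + q2^2 + q3^2 = 1) :
    rotOfQuat q0 q1 q2 q3 * (rotOfQuat q0 q1 q2 q3)ᵀ = 1 := by
  rw [one_fin_three]
  ext i j
  fin_cases i <;> fin_cases j <;>
    simp only [rotOfQuat, mul_apply, transpose_apply, of_apply, Fin.sum_univ_three, Fin.zero_eta,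
      Fin.mk_one, Fin.reduceFinMk, cons_val_zero, cons_val_one, cons_val_two, head_cons,
      tail_cons] <;>
    -- diagonal entries are `(q0^2 + q1^2 + q2^2 + q3^2)^2`, the others vanish identically
    first | ring1 | linear_combination (q0^2 + q1^2 + q2^2 + q3^2 + 1) * hq

theorem add_rotOfQuat_mulVec_two (hq : q0^2 + q1^2 + q2^2 + q3^2 = 1)
    (pUx pUy pUz pIx pIy pIz : ℝ) :
    (![pIx, pIy, pIz] + rotOfQuat q0 q1 q2 q3 *ᵥ ![pUx, pUy, pUz]) 2
      = pUz + pIz + 2*pUy*q0*q1 - 2*pUz*q1^2 - 2*pUx*q0*q2 - 2*pUz*q2^2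
        + 2*pUx*q1*q3 + 2*pUy*q2*q3 := by
  simp only [rotOfQuat, Pi.add_apply, mulVec, dotProduct, of_apply, Fin.sum_univ_three,
    cons_val_zero, cons_val_one, cons_val_two, head_cons, tail_cons]
  linear_combination pUz * hq

theorem add_rotOfQuat_transpose_mulVec (hq : q0^2 + q1^2 + q2^2 + q3^2 = 1)
    (pUx pUy pUz pIx pIy pIz : ℝ) :
    ![pUx, pUy, pUz] + (rotOfQuat q0 q1 q2 q3)ᵀ *ᵥ ![pIx, pIy, pIz]
      = ![pUx + pIx - 2*pIz*q0*q2 + 2*pIy*q1*q2 - 2*pIx*q2^2 + 2*pIy*q0*q3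
            + 2*pIz*q1*q3 - 2*pIx*q3^2,
          pUy + pIy + 2*pIz*q0*q1 - 2*pIy*q1^2 + 2*pIx*q1*q2 - 2*pIx*q0*q3
            + 2*pIz*q2*q3 - 2*pIy*q3^2,
          pUz + pIz - 2*pIy*q0*q1 - 2*pIz*q1^2 + 2*pIx*q0*q2 - 2*pIz*q2^2
            + 2*pIx*q1*q3 + 2*pIy*q2*q3] := by
  ext i
  fin_cases i <;>
    simp only [rotOfQuat, Pi.add_apply, mulVec, dotProduct, transpose_apply, of_apply,
      Fin.sum_univ_three, Fin.zero_eta, Fin.mk_one, Fin.reduceFinMk, cons_val_zero, cons_val_one,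
      cons_val_two, head_cons, tail_cons]
  · linear_combination pIx * hq
  · linear_combination pIy * hq
  · linear_combination pIz * hq

end UnitQuaternion

theorem stmt_10 (q0 q1 q2 q3 : ℝ) (hq : q0^2 + q1^2 + q2^2 + q3^2 = 1)
    (pUx pUy pUz pIx pIy pIz pjy pkx : ℝ)
    (h : ℝ)
    (hh : h = pUz + pIz + 2*pUy*q0*q1 - 2*pUz*q1^2 - 2*pUx*q0*q2 - 2*pUz*q2^2
        + 2*pUx*q1*q3 + 2*pUy*q2*q3)
    (f1 f2 f3 : ℝ)
    (hf1 : f1 = pUz + pIz - 2*pIy*q0*q1 - 2*pIz*q1^2 + 2*pIx*q0*q2 - 2*pIz*q2^2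
        + 2*pIx*q1*q3 + 2*pIy*q2*q3)
    (hf2 : f2 = pUy + pIy + 2*pIz*q0*q1 - 2*pIy*q1^2 + 2*pIx*q1*q2 - 2*pIx*q0*q3
        + 2*pIz*q2*q3 - 2*pIy*q3^2)
    (hf3 : f3 = pUx + pIx - 2*pIz*q0*q2 + 2*pIy*q1*q2 - 2*pIx*q2^2 + 2*pIy*q0*q3
        + 2*pIz*q1*q3 - 2*pIx*q3^2)
    (D1 D2 D3 : ℝ)
    (hD1 : D1 = -16 * pjy * pkx * h * f1)
    (hD2 : D2 = 16 * pjy * pkx * h * f2)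
    (hD3 : D3 = -16 * pjy * pkx * h * f3)
    (hjy : pjy ≠ 0) (hkx : pkx ≠ 0)
    (hz : ((![pIx, pIy, pIz] : Fin 3 → ℝ)
        + (rotOfQuat q0 q1 q2 q3).mulVec ![pUx, pUy, pUz]) 2 ≠ 0) :
    ¬ (D1 = 0 ∧ D2 = 0 ∧ D3 = 0) := by
  rintro ⟨hD1_zero, hD2_zero, hD3_zero⟩
  have hz_eq : (![pIx, pIy, pIz] + rotOfQuat q0 q1 q2 q3 *ᵥ ![pUx, pUy, pUz]) 2 = h := by
    rw [hh, add_rotOfQuat_mulVec_two hq]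
  have hcoeff : 16 * pjy * pkx * h ≠ 0 :=
    mul_ne_zero (mul_ne_zero (mul_ne_zero (by norm_num) hjy) hkx) (hz_eq ▸ hz)
  have hf1_zero : f1 = 0 :=
    (mul_eq_zero.mp (by linear_combination hD1 - hD1_zero)).resolve_left hcoeff
  have hf2_zero : f2 = 0 :=
    (mul_eq_zero.mp (by linear_combination hD2_zero - hD2)).resolve_left hcoeff
  have hf3_zero : f3 = 0 :=
    (mul_eq_zero.mp (by linear_combination hD3 - hD3_zero)).resolve_left hcoeff
  have hzero : ![pUx, pUy, pUz] + (rotOfQuat q0 q1 q2 q3)ᵀ *ᵥ ![pIx, pIy, pIz] = 0 := by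
    rw [add_rotOfQuat_transpose_mulVec hq, ← hf1, ← hf2, ← hf3, hf1_zero, hf2_zero, hf3_zero]
    simp
  rw [add_mulVec_eq_mulVec_add_transpose_mulVec (rotOfQuat_mul_transpose hq), hzero,
    mulVec_zero] at hz
  exact hz rfl
end

section
/- (Key constraint claim in the proofs of Lemmas 3 and 4.) Let q = (q0,q1,q2,q3) be a unit quaternion and let p_U = (p_Ux, p_Uy, p_Uz), p_I = (p_Ix, p_Iy, p_Iz) ∈ ℝ³. If the three polynomials g1, g2, g3 defined in the context all vanish, then p_Iz + p_Ux(−2 q0 q2 + 2 q1 q3) + p_Uy(2 q0 q1 + 2 q2 q3) + p_Uz(q0² − q1² − q2² + q3²) = 0; that is, the z-coordinate of the world-frame position p_I + R(q)·p_U of the mobile radio is zero. Equivalently, if this z-coordinate is nonzero, then g1, g2, g3 cannot vanish simultaneously. -/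
/-!
For a unit quaternion the z-coordinate of `p_I + R(q) p_U` is the combination
`R₀₀ g1 - 2 R₀₁ g2 - R₀₂ g3` of the three constraint polynomials, with weights taken from the
first row of `R(q)`; hence it vanishes whenever `g1`, `g2`, `g3` do.
-/

open Matrix

def quatRotMatrix (q0 q1 q2 q3 : ℝ) : Matrix (Fin 3) (Fin 3) ℝ :=
  !![q0^2 + q1^2 - q2^2 - q3^2, 2*(q1*q2 - q0*q3), 2*(q1*q3 + q0*q2);
     2*(q1*q2 + q0*q3), q0^2 - q1^2 + q2^2 - q3^2, 2*(q2*q3 - q0*q1);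
     2*(q1*q3 - q0*q2), 2*(q2*q3 + q0*q1), q0^2 - q1^2 - q2^2 + q3^2]

theorem radio_z_eq_quatRotMatrix_row_zero_combination {q0 q1 q2 q3 : ℝ}
    (hq : q0^2 + q1^2 + q2^2 + q3^2 = 1) (pUx pUy pUz pIx pIz : ℝ) :
    pIz + pUx*(-2*q0*q2 + 2*q1*q3) + pUy*(2*q0*q1 + 2*q2*q3)
        + pUz*(q0^2 - q1^2 - q2^2 + q3^2) =
      quatRotMatrix q0 q1 q2 q3 0 0 *
          (pUz + pIz + 2*pUy*q0*q1 - 2*pUz*q1^2 + 2*pIx*q0*q2 - 2*pIz*q2^2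
            - 2*pIx*q1*q3 - 2*pUy*q2*q3 - 2*pUz*q3^2 - 2*pIz*q3^2)
        - 2 * quatRotMatrix q0 q1 q2 q3 0 1 *
          (pUx*q0*q1 + pIx*q0*q1 + pUz*q1*q2 - pIz*q1*q2 + pUz*q0*q3
            + pIz*q0*q3 - pUx*q2*q3 + pIx*q2*q3)
        - quatRotMatrix q0 q1 q2 q3 0 2 *
          (pUx + pIx - 2*pUx*q1^2 - 2*pIx*q1^2 - 2*pIz*q0*q2 - 2*pUy*q1*q2
            - 2*pIx*q2^2 - 2*pUy*q0*q3 - 2*pIz*q1*q3 - 2*pUx*q3^2) := by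
  simp only [quatRotMatrix, of_apply, cons_val', cons_val_zero, cons_val_fin_one, cons_val_one,
    cons_val]
  linear_combination (-pIz - 2*q3^2*pIz - 2*q3^2*pUz - 2*q2*q3*pUy - 2*q2^2*pIz
    - 2*q1*q3*pIx - 4*q1*q3*pUx + 2*q1^2*pUz - 2*q0*q2*pIx - 2*q0*q1*pUy) * hq

theorem stmt_11_general (q0 q1 q2 q3 : ℝ) (hq : q0^2 + q1^2 + q2^2 + q3^2 = 1)
    (pUx pUy pUz pIx pIz : ℝ)
    (g1 g2 g3 : ℝ)
    (hg1 : g1 = pUz + pIz + 2*pUy*q0*q1 - 2*pUz*q1^2 + 2*pIx*q0*q2 - 2*pIz*q2^2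
        - 2*pIx*q1*q3 - 2*pUy*q2*q3 - 2*pUz*q3^2 - 2*pIz*q3^2)
    (hg2 : g2 = pUx*q0*q1 + pIx*q0*q1 + pUz*q1*q2 - pIz*q1*q2 + pUz*q0*q3
        + pIz*q0*q3 - pUx*q2*q3 + pIx*q2*q3)
    (hg3 : g3 = pUx + pIx - 2*pUx*q1^2 - 2*pIx*q1^2 - 2*pIz*q0*q2 - 2*pUy*q1*q2
        - 2*pIx*q2^2 - 2*pUy*q0*q3 - 2*pIz*q1*q3 - 2*pUx*q3^2) :
    ((g1 = 0 ∧ g2 = 0 ∧ g3 = 0) →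
      pIz + pUx*(-2*q0*q2 + 2*q1*q3) + pUy*(2*q0*q1 + 2*q2*q3)
        + pUz*(q0^2 - q1^2 - q2^2 + q3^2) = 0) ∧
    (pIz + pUx*(-2*q0*q2 + 2*q1*q3) + pUy*(2*q0*q1 + 2*q2*q3)
        + pUz*(q0^2 - q1^2 - q2^2 + q3^2) ≠ 0 →
      ¬ (g1 = 0 ∧ g2 = 0 ∧ g3 = 0)) := by
  have hz := radio_z_eq_quatRotMatrix_row_zero_combination hq pUx pUy pUz pIx pIz
  rw [← hg1, ← hg2, ← hg3] at hz
  have key : g1 = 0 ∧ g2 = 0 ∧ g3 = 0 →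
      pIz + pUx*(-2*q0*q2 + 2*q1*q3) + pUy*(2*q0*q1 + 2*q2*q3)
        + pUz*(q0^2 - q1^2 - q2^2 + q3^2) = 0 := by
    rintro ⟨h1, h2, h3⟩
    rw [hz, h1, h2, h3]
    ring
  exact ⟨key, fun hne hg => hne (key hg)⟩

theorem stmt_11 (q0 q1 q2 q3 : ℝ) (hq : q0^2 + q1^2 + q2^2 + q3^2 = 1)
    (pUx pUy pUz pIx pIy pIz : ℝ)
    (g1 g2 g3 : ℝ)
    (hg1 : g1 = pUz + pIz + 2*pUy*q0*q1 - 2*pUz*q1^2 + 2*pIx*q0*q2 - 2*pIz*q2^2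
        - 2*pIx*q1*q3 - 2*pUy*q2*q3 - 2*pUz*q3^2 - 2*pIz*q3^2)
    (hg2 : g2 = pUx*q0*q1 + pIx*q0*q1 + pUz*q1*q2 - pIz*q1*q2 + pUz*q0*q3
        + pIz*q0*q3 - pUx*q2*q3 + pIx*q2*q3)
    (hg3 : g3 = pUx + pIx - 2*pUx*q1^2 - 2*pIx*q1^2 - 2*pIz*q0*q2 - 2*pUy*q1*q2
        - 2*pIx*q2^2 - 2*pUy*q0*q3 - 2*pIz*q1*q3 - 2*pUx*q3^2) :
    ((g1 = 0 ∧ g2 = 0 ∧ g3 = 0) →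
      pIz + pUx*(-2*q0*q2 + 2*q1*q3) + pUy*(2*q0*q1 + 2*q2*q3)
        + pUz*(q0^2 - q1^2 - q2^2 + q3^2) = 0) ∧
    (pIz + pUx*(-2*q0*q2 + 2*q1*q3) + pUy*(2*q0*q1 + 2*q2*q3)
        + pUz*(q0^2 - q1^2 - q2^2 + q3^2) ≠ 0 →
      ¬ (g1 = 0 ∧ g2 = 0 ∧ g3 = 0)) :=
  stmt_11_general q0 q1 q2 q3 hq pUx pUy pUz pIx pIz g1 g2 g3 hg1 hg2 hg3
end

section
/- (Lemmas 3 and 4, explicit polynomial form.) Let q = (q0,q1,q2,q3) be a unit quaternion, let p_U = (p_Ux, p_Uy, p_Uz), p_I = (p_Ix, p_Iy, p_Iz) ∈ ℝ³, and let p_jy ∈ ℝ. Let f1, f2, f3 and g1, g2, g3 be the explicit polynomials defined in the context. If p_jy ≠ 0 and the third component of p_I + R(q)·p_U is nonzero, then the nine products p_jy · f_i · g_j (i, j ∈ {1,2,3}), which are, up to nonzero constant factors, the nine row-selection determinants of the 9×3 matrices F13·R − F15 (Lemma 3) and F5·F3 + F18 (Lemma 4) of the observability analysis, are not all zero. -/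
open Matrix

/-!
The height `z` of the mobile radio is a linear combination of `f1, f2, f3`, and also of
`g1, g2, g3`, with coefficients polynomial in `q`. Since `z ≠ 0`, some `f i` and some `g j` are
nonzero, and then so is `pjy * f i * g j`.
-/

theorem Matrix.ne_zero_of_dotProduct_ne_zero {ι R : Type*} [Fintype ι] [NonUnitalNonAssocSemiring R]
    {c v : ι → R} (h : c ⬝ᵥ v ≠ 0) : v ≠ 0 := by
  rintro rfl
  exact h (dotProduct_zero c)

section

variable (q0 q1 q2 q3 pUx pUy pUz pIx pIy pIz : ℝ)

noncomputable def radioPos : Fin 3 → ℝ :=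
  ![pIx, pIy, pIz] + rotOfQuat q0 q1 q2 q3 *ᵥ ![pUx, pUy, pUz]

/-- For a unit quaternion this is `pU + Rᵀ pI` with its coordinates reversed, so applying `R`
recovers the radio position `pI + R pU`. -/
def fVec : Fin 3 → ℝ :=
  ![pUz + pIz - 2*pIy*q0*q1 - 2*pIz*q1^2 + 2*pIx*q0*q2 - 2*pIz*q2^2 + 2*pIx*q1*q3 + 2*pIy*q2*q3,
    pUy + pIy + 2*pIz*q0*q1 - 2*pIy*q1^2 + 2*pIx*q1*q2 - 2*pIx*q0*q3 + 2*pIz*q2*q3 - 2*pIy*q3^2,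
    pUx + pIx - 2*pIz*q0*q2 + 2*pIy*q1*q2 - 2*pIx*q2^2 + 2*pIy*q0*q3 + 2*pIz*q1*q3 - 2*pIx*q3^2]

def gVec : Fin 3 → ℝ :=
  ![pUz + pIz + 2*pUy*q0*q1 - 2*pUz*q1^2 + 2*pIx*q0*q2 - 2*pIz*q2^2 - 2*pIx*q1*q3
      - 2*pUy*q2*q3 - 2*pUz*q3^2 - 2*pIz*q3^2,
    pUx*q0*q1 + pIx*q0*q1 + pUz*q1*q2 - pIz*q1*q2 + pUz*q0*q3 + pIz*q0*q3 - pUx*q2*q3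
      + pIx*q2*q3,
    pUx + pIx - 2*pUx*q1^2 - 2*pIx*q1^2 - 2*pIz*q0*q2 - 2*pUy*q1*q2 - 2*pIx*q2^2
      - 2*pUy*q0*q3 - 2*pIz*q1*q3 - 2*pUx*q3^2]

theorem radioPos_two : radioPos q0 q1 q2 q3 pUx pUy pUz pIx pIy pIz 2 =
    pIz + 2*(q1*q3 - q0*q2)*pUx + 2*(q2*q3 + q0*q1)*pUy + (q0^2 - q1^2 - q2^2 + q3^2)*pUz := by
  simp [radioPos, rotOfQuat]
  ring

variable {q0 q1 q2 q3 pUx pUy pUz pIx pIy pIz}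

theorem radioPos_two_eq_dotProduct_fVec (hq : q0^2 + q1^2 + q2^2 + q3^2 = 1) :
    radioPos q0 q1 q2 q3 pUx pUy pUz pIx pIy pIz 2 =
      ![q0^2 - q1^2 - q2^2 + q3^2, 2*(q2*q3 + q0*q1), 2*(q1*q3 - q0*q2)] ⬝ᵥ
        fVec q0 q1 q2 q3 pUx pUy pUz pIx pIy pIz := by
  rw [radioPos_two]
  simp [fVec, dotProduct, Fin.sum_univ_three]
  linear_combination (-(pIz - 2*q2*q3*pIy + 2*q2^2*pIz - 2*q1*q3*pIx + 2*q1^2*pIz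
      + 2*q0*q2*pIx - 2*q0*q1*pIy)) * hq

theorem radioPos_two_eq_dotProduct_gVec (hq : q0^2 + q1^2 + q2^2 + q3^2 = 1) :
    radioPos q0 q1 q2 q3 pUx pUy pUz pIx pIy pIz 2 =
      ![1 - 2*q2^2 - 2*q3^2, 4*(q0*q3 - q1*q2), -2*(q1*q3 + q0*q2)] ⬝ᵥ
        gVec q0 q1 q2 q3 pUx pUy pUz pIx pIz := by
  rw [radioPos_two]
  simp [gVec, dotProduct, Fin.sum_univ_three]
  linear_combination (-(-pUz + 4*q3^2*pIz + 4*q3^2*pUz + 4*q2*q3*pUy + 4*q2^2*pIz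
      + 4*q1*q3*pIx + 4*q1*q3*pUx)) * hq

end

theorem stmt_12 (q0 q1 q2 q3 : ℝ) (hq : q0^2 + q1^2 + q2^2 + q3^2 = 1)
    (pUx pUy pUz pIx pIy pIz pjy : ℝ)
    (f1 f2 f3 g1 g2 g3 : ℝ)
    (hf1 : f1 = pUz + pIz - 2*pIy*q0*q1 - 2*pIz*q1^2 + 2*pIx*q0*q2 - 2*pIz*q2^2
        + 2*pIx*q1*q3 + 2*pIy*q2*q3)
    (hf2 : f2 = pUy + pIy + 2*pIz*q0*q1 - 2*pIy*q1^2 + 2*pIx*q1*q2 - 2*pIx*q0*q3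
        + 2*pIz*q2*q3 - 2*pIy*q3^2)
    (hf3 : f3 = pUx + pIx - 2*pIz*q0*q2 + 2*pIy*q1*q2 - 2*pIx*q2^2 + 2*pIy*q0*q3
        + 2*pIz*q1*q3 - 2*pIx*q3^2)
    (hg1 : g1 = pUz + pIz + 2*pUy*q0*q1 - 2*pUz*q1^2 + 2*pIx*q0*q2 - 2*pIz*q2^2
        - 2*pIx*q1*q3 - 2*pUy*q2*q3 - 2*pUz*q3^2 - 2*pIz*q3^2)
    (hg2 : g2 = pUx*q0*q1 + pIx*q0*q1 + pUz*q1*q2 - pIz*q1*q2 + pUz*q0*q3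
        + pIz*q0*q3 - pUx*q2*q3 + pIx*q2*q3)
    (hg3 : g3 = pUx + pIx - 2*pUx*q1^2 - 2*pIx*q1^2 - 2*pIz*q0*q2 - 2*pUy*q1*q2
        - 2*pIx*q2^2 - 2*pUy*q0*q3 - 2*pIz*q1*q3 - 2*pUx*q3^2)
    (hjy : pjy ≠ 0)
    (hz : ((![pIx, pIy, pIz] : Fin 3 → ℝ)
        + (rotOfQuat q0 q1 q2 q3).mulVec ![pUx, pUy, pUz]) 2 ≠ 0) :
    ¬ ∀ i j : Fin 3,
        pjy * ((![f1, f2, f3] : Fin 3 → ℝ) i) * ((![g1, g2, g3] : Fin 3 → ℝ) j) = 0 := by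
  change radioPos q0 q1 q2 q3 pUx pUy pUz pIx pIy pIz 2 ≠ 0 at hz
  subst hf1 hf2 hf3 hg1 hg2 hg3
  obtain ⟨i, hi⟩ := Function.ne_iff.mp <|
    ne_zero_of_dotProduct_ne_zero (radioPos_two_eq_dotProduct_fVec hq ▸ hz)
  obtain ⟨j, hj⟩ := Function.ne_iff.mp <|
    ne_zero_of_dotProduct_ne_zero (radioPos_two_eq_dotProduct_gVec hq ▸ hz)
  exact fun h => mul_ne_zero (mul_ne_zero hjy hi) hj (h i j)
end
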